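/- arXiv:1607.05929 — 2 statements merged into one kernel-verified Lean document; each statement's English description precedes it below -/
import Mathlib

section
/- Let 1 < α < 2. Then the sequence n^α · ∑_{k=0}^{n} g_k^α converges to 1/Γ(1-α) as n → ∞. -/
/-!
Pascal's rule makes the partial sums telescope: `∑_{k ≤ n} g_k^α = g_n^{α-1} = s (s+1) ⋯ (s+n-1) / n!`
with `s = 1 - α`. Against Euler's sequence `GammaSeq s n = n^s n! / (s (s+1) ⋯ (s+n))` this reads
`n^α g_n^{α-1} = n / (n + s) · (GammaSeq s n)⁻¹`, which tends to `1 / Γ(s)`.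
-/

/-- Grünwald–Letnikov coefficient `g_k^α = (-1)^k * binom(α,k)`. -/
noncomputable def gl (a : ℝ) (k : ℕ) : ℝ :=
  (-1 : ℝ) ^ k * (∏ j ∈ Finset.range k, (a - j)) / (Nat.factorial k : ℝ)

/-- Shifted Grünwald weights. -/
noncomputable def glw (a : ℝ) : ℕ → ℝ
  | 0 => a / 2 * gl a 0
  | (k+1) => a / 2 * gl a (k+1) + (2 - a) / 2 * gl a k

/-- Second-order Lubich coefficients `l_m^{2,γ}`. -/
noncomputable def lub2 (g : ℝ) (m : ℕ) : ℝ :=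
  (3/2 : ℝ) ^ g * ∑ k ∈ Finset.range (m+1), (1/3 : ℝ) ^ k * gl g k * gl g (m - k)

/-- The Toeplitz matrix `B_α` of size `(M-1) × (M-1)`. -/
noncomputable def Bmat (a : ℝ) (M : ℕ) : Matrix (Fin (M-1)) (Fin (M-1)) ℝ :=
  fun i j => if (j : ℕ) ≤ (i : ℕ) + 1 then glw a ((i : ℕ) + 1 - (j : ℕ)) else 0

/-- The symmetric matrix `A_α = B_α + B_αᵀ`. -/
noncomputable def Amat (a : ℝ) (M : ℕ) : Matrix (Fin (M-1)) (Fin (M-1)) ℝ :=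
  Bmat a M + (Bmat a M).transpose

open Filter Topology Finset

lemma gl_eq_prod_div_factorial (a : ℝ) (n : ℕ) :
    gl a n = (∏ j ∈ range n, ((j : ℝ) - a)) / n.factorial := by
  have hsign : (-1 : ℝ) ^ n = ∏ _j ∈ range n, (-1 : ℝ) := by simp
  rw [gl, hsign, ← prod_mul_distrib]
  congr 2 with j
  ring

lemma gl_sub_one_succ (a : ℝ) (n : ℕ) : gl (a - 1) (n + 1) = gl (a - 1) n + gl a (n + 1) := by
  set P := ∏ j ∈ range n, ((j : ℝ) - (a - 1))
  have hshift : ∏ j ∈ range (n + 1), ((j : ℝ) - a) = P * (0 - a) := by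
    rw [prod_range_succ']
    push_cast
    congr 1
    exact prod_congr rfl fun j _ ↦ by ring
  have hn : (n.factorial : ℝ) ≠ 0 := by positivity
  rw [gl_eq_prod_div_factorial, gl_eq_prod_div_factorial, gl_eq_prod_div_factorial, hshift,
    prod_range_succ, Nat.factorial_succ, Nat.cast_mul]
  field_simp
  push_cast
  ring

lemma sum_range_succ_gl (a : ℝ) (n : ℕ) : ∑ k ∈ range (n + 1), gl a k = gl (a - 1) n := by
  induction n with
  | zero => simp [gl]
  | succ n ih => rw [sum_range_succ, ih, gl_sub_one_succ]

lemma gl_neg (s : ℝ) (n : ℕ) : gl (-s) n = (∏ j ∈ range n, (s + j)) / n.factorial := by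
  simp only [gl_eq_prod_div_factorial, sub_neg_eq_add, add_comm]

namespace Real

lemma tendsto_inv_GammaSeq (s : ℝ) :
    Tendsto (fun n ↦ (GammaSeq s n)⁻¹) atTop (𝓝 (Gamma s)⁻¹) := by
  by_cases hpole : ∃ m : ℕ, s = -m
  · obtain ⟨m, rfl⟩ := hpole
    -- the factor `s + m` of the denominator vanishes, so `GammaSeq s n = x / 0 = 0` for `n ≥ m`
    refine tendsto_const_nhds.congr' ?_
    filter_upwards [eventually_ge_atTop m] with n hn
    have hprod : ∏ j ∈ range (n + 1), (-(m : ℝ) + j) = 0 :=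
      prod_eq_zero (mem_range.2 (Nat.lt_succ_of_le hn)) (neg_add_cancel _)
    simp [GammaSeq, hprod, Gamma_neg_nat_eq_zero]
  · push Not at hpole
    exact (GammaSeq_tendsto_Gamma s).inv₀ (Gamma_ne_zero hpole)

lemma rpow_one_sub_mul_gl_neg_eq (s : ℝ) {n : ℕ} (hn : 0 < n) (hsn : (n : ℝ) + s ≠ 0) :
    (n : ℝ) ^ (1 - s) * gl (-s) n = n / (n + s) * (GammaSeq s n)⁻¹ := by
  have hn' : (0 : ℝ) < n := by exact_mod_cast hn
  rw [GammaSeq, inv_div, prod_range_succ, gl_neg, rpow_sub hn', rpow_one]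
  field_simp
  ring

lemma tendsto_rpow_one_sub_mul_gl_neg (s : ℝ) :
    Tendsto (fun n : ℕ ↦ (n : ℝ) ^ (1 - s) * gl (-s) n) atTop (𝓝 (Gamma s)⁻¹) := by
  have hlim := (tendsto_natCast_div_add_atTop s).mul (tendsto_inv_GammaSeq s)
  rw [one_mul] at hlim
  refine hlim.congr' ?_
  have hpos : ∀ᶠ n : ℕ in atTop, (n : ℝ) + s ≠ 0 :=
    (tendsto_natCast_atTop_atTop.atTop_add tendsto_const_nhds).eventually_ne_atTop 0
  filter_upwards [eventually_gt_atTop 0, hpos] with n hn hsn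
  exact (rpow_one_sub_mul_gl_neg_eq s hn hsn).symm

end Real

theorem stmt6_general (α : ℝ) :
    Filter.Tendsto (fun n : ℕ => (n : ℝ) ^ α * ∑ k ∈ Finset.range (n+1), gl α k)
      Filter.atTop (nhds (1 / Real.Gamma (1 - α))) := by
  simp_rw [sum_range_succ_gl, one_div]
  simpa using Real.tendsto_rpow_one_sub_mul_gl_neg (1 - α)

theorem stmt6 (α : ℝ) (hα1 : 1 < α) (hα2 : α < 2) :
    Filter.Tendsto (fun n : ℕ => (n : ℝ) ^ α * ∑ k ∈ Finset.range (n+1), gl α k)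
      Filter.atTop (nhds (1 / Real.Gamma (1 - α))) :=
  stmt6_general α
end

section
/- Let 1 < α < 2. Then the shifted Grünwald weights satisfy: w_0^α > 0; w_1^α < 0; w_0^α + w_2^α > 0; and w_k^α > 0 for every k ≥ 3. -/
/-!
For `1 < α < 2` the recurrence `g_{k+1} = g_k (k - α)/(k + 1)` gives `g_0 = 1`, `g_1 = -α < 0`,
and `g_k > 0` for all `k ≥ 2`, since `g_2 = α(α-1)/2 > 0` and every later factor `(k - α)/(k+1)`
is positive. Hence `w_k`, a positive combination of `g_k` and `g_{k-1}`, is positive for `k ≥ 3`,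
while `w_1 = -(α+2)(α-1)/2` and `w_0 + w_2 = α(α+2)(α-1)/4` are computed in closed form.
-/

section GrunwaldLetnikov

variable (a : ℝ)

@[simp]
lemma gl_zero : gl a 0 = 1 := by
  simp [gl]

lemma gl_succ (k : ℕ) : gl a (k + 1) = gl a k * ((k - a) / (k + 1)) := by
  simp only [gl, Finset.prod_range_succ, Nat.factorial_succ, pow_succ]
  push_cast
  field_simp
  ring

@[simp]
lemma gl_one : gl a 1 = -a := by
  simp [gl_succ]

lemma gl_two : gl a 2 = a * (a - 1) / 2 := by
  rw [gl_succ, gl_one]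
  norm_num
  ring

lemma glw_succ (k : ℕ) : glw a (k + 1) = a / 2 * gl a (k + 1) + (2 - a) / 2 * gl a k := rfl

lemma glw_one : glw a 1 = -((a + 2) * (a - 1)) / 2 := by
  rw [glw_succ, gl_one, gl_zero]
  ring

lemma glw_zero_add_glw_two : glw a 0 + glw a 2 = a * (a + 2) * (a - 1) / 4 := by
  rw [glw, glw_succ, gl_two, gl_one, gl_zero]
  ring

variable {a}

lemma gl_pos_of_two_le (ha₁ : 1 < a) (ha₂ : a < 2) {k : ℕ} (hk : 2 ≤ k) : 0 < gl a k := by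
  induction k, hk using Nat.le_induction with
  | base =>
    rw [gl_two]
    have : 0 < a * (a - 1) := mul_pos (by linarith) (by linarith)
    positivity
  | succ n hn ih =>
    have hn' : (2 : ℝ) ≤ n := by exact_mod_cast hn
    rw [gl_succ]
    exact mul_pos ih (div_pos (by linarith) (by positivity))

lemma glw_pos_of_three_le (ha₁ : 1 < a) (ha₂ : a < 2) {k : ℕ} (hk : 3 ≤ k) : 0 < glw a k := by
  obtain ⟨m, rfl⟩ : ∃ m, k = m + 1 := ⟨k - 1, by omega⟩
  rw [glw_succ]
  have hm₁ := gl_pos_of_two_le ha₁ ha₂ (k := m + 1) (by omega)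
  have hm := gl_pos_of_two_le ha₁ ha₂ (k := m) (by omega)
  have : 0 < a / 2 * gl a (m + 1) := by positivity
  have : 0 < (2 - a) / 2 * gl a m := mul_pos (by linarith) hm
  linarith

end GrunwaldLetnikov

theorem stmt7 (α : ℝ) (hα1 : 1 < α) (hα2 : α < 2) :
    0 < glw α 0 ∧ glw α 1 < 0 ∧ 0 < glw α 0 + glw α 2 ∧
    ∀ k : ℕ, 3 ≤ k → 0 < glw α k := by
  have hα₀ : 0 < α := by linarith
  have hα₁ : 0 < α - 1 := by linarith
  refine ⟨?_, ?_, ?_, fun k hk => glw_pos_of_three_le hα1 hα2 hk⟩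
  · simpa [glw] using hα₀
  · rw [glw_one]
    have : 0 < (α + 2) * (α - 1) := by positivity
    linarith
  · rw [glw_zero_add_glw_two]
    positivity
end
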